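/- arXiv:2209.14310 — 5 statements merged into one kernel-verified Lean document; each statement's English description precedes it below -/
import Mathlib

section
/- Let A be a Hermitian operator on a 2N-dimensional complex Hilbert space and T an antiunitary involution (T² = 1) that anticommutes with A. Then there exists an orthonormal basis of the form φ₁, Tφ₁, ..., φ_N, Tφ_N where each φᵢ is an eigenvector of A with eigenvalue aᵢ and Tφᵢ is an eigenvector of A with eigenvalue −aᵢ. -/
/-!
If `A φ = a φ` then `A (T φ) = -a T φ`. For `a ≠ 0` the eigenvectors `φ` and `T φ` belong to
different eigenvalues of the Hermitian `A`, hence are orthogonal. If instead `A` vanishes on a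
`T`-invariant space of dimension at least two, then `T` is a real structure there, and
`φ = x + i z` with `x, z` orthonormal and `T`-fixed satisfies `T φ = x - i z ⊥ φ`. Either way
there is a unit eigenvector `φ ⊥ T φ`; the orthogonal complement of `span {φ, T φ}` is again
invariant under `A` and `T`, so the pairs `φ, T φ` can be split off one at a time.
-/

open scoped InnerProductSpace

open Module Submodule

section RCLike

variable {𝕜 E : Type*} [RCLike 𝕜] [NormedAddCommGroup E] [InnerProductSpace 𝕜 E]
  {A : E →ₗ[𝕜] E} {T : E →ₗ⋆[𝕜] E}

theorem apply_map_eq_neg_smul_of_anticomm (hTA : ∀ x, T (A x) = -A (T x)) {v : E} {a : ℝ}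
    (hv : A v = (a : 𝕜) • v) : A (T v) = (-(a : 𝕜)) • T v := by
  have h := hTA v
  rw [hv, map_smulₛₗ, RCLike.conj_ofReal] at h
  rw [neg_smul, h, neg_neg]

theorem inner_map_self_eq_zero_of_apply_eq_smul (hA : A.IsSymmetric)
    (hTA : ∀ x, T (A x) = -A (T x)) {v : E} {a : ℝ} (ha : a ≠ 0) (hv : A v = (a : 𝕜) • v) :
    ⟪v, T v⟫_𝕜 = 0 := by
  have h := hA v (T v)
  rw [hv, apply_map_eq_neg_smul_of_anticomm hTA hv, inner_smul_left, inner_smul_right,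
    RCLike.conj_ofReal] at h
  have h2 : (a : 𝕜) * ⟪v, T v⟫_𝕜 = 0 := by linear_combination h / 2
  exact (mul_eq_zero.mp h2).resolve_left (by exact_mod_cast ha)

theorem map_mem_orthogonal_of_antiunitary (hT_inner : ∀ x y, ⟪T x, T y⟫_𝕜 = ⟪y, x⟫_𝕜)
    (hT_inv : ∀ x, T (T x) = x) {K : Submodule 𝕜 E} (hK : ∀ x ∈ K, T x ∈ K) :
    ∀ x ∈ Kᗮ, T x ∈ Kᗮ := by
  intro x hx k hk
  rw [← hT_inv k, hT_inner]
  exact inner_left_of_mem_orthogonal (hK k hk) hx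

theorem orthonormal_sum_elim_map (hT_inner : ∀ x y, ⟪T x, T y⟫_𝕜 = ⟪y, x⟫_𝕜) {ι : Type*}
    {φ : ι → E} (hφ : Orthonormal 𝕜 φ) (hφT : ∀ i j, ⟪φ i, T (φ j)⟫_𝕜 = 0) :
    Orthonormal 𝕜 (Sum.elim φ (fun i => T (φ i))) := by
  classical
  rw [orthonormal_iff_ite] at hφ ⊢
  rintro (i | i) (j | j)
  · simpa using hφ i j
  · simpa using hφT i j
  · simp [inner_eq_zero_symm.mp (hφT j i)]
  · simp [hT_inner, hφ j i, eq_comm]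

theorem LinearMap.IsSymmetric.eq_zero_of_eigenvalues_eq_zero [FiniteDimensional 𝕜 E]
    (hA : A.IsSymmetric) {n : ℕ} (hn : finrank 𝕜 E = n) (h : ∀ i, hA.eigenvalues hn i = 0) :
    A = 0 :=
  (hA.eigenvectorBasis hn).toBasis.ext fun i => by simp [h]

end RCLike

section Complex

variable {E : Type*} [NormedAddCommGroup E] [InnerProductSpace ℂ E] {T : E →ₗ⋆[ℂ] E}

theorem exists_norm_eq_one_map_eq_self (hT_inv : ∀ x, T (T x) = x) {K : Submodule ℂ E}
    (hK : ∀ x ∈ K, T x ∈ K) (hK0 : K ≠ ⊥) : ∃ x ∈ K, ‖x‖ = 1 ∧ T x = x := by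
  obtain ⟨ψ, hψK, hψ0⟩ := exists_mem_ne_zero_of_ne_bot hK0
  -- `ψ + T ψ` and `i (ψ - T ψ)` are `T`-fixed, and they cannot both vanish.
  obtain ⟨y, hyK, hy0, hTy⟩ : ∃ y ∈ K, y ≠ 0 ∧ T y = y := by
    by_cases hc : ψ + T ψ = 0
    · refine ⟨Complex.I • (ψ - T ψ), K.smul_mem _ (K.sub_mem hψK (hK ψ hψK)), ?_, ?_⟩
      · rw [eq_neg_of_add_eq_zero_right hc, sub_neg_eq_add, ← two_smul ℂ]
        simp [hψ0]
      · rw [map_smulₛₗ, map_sub, hT_inv, Complex.conj_I, neg_smul, ← smul_neg, neg_sub]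
    · exact ⟨ψ + T ψ, K.add_mem hψK (hK ψ hψK), hc, by rw [map_add, hT_inv, add_comm]⟩
  refine ⟨(‖y‖⁻¹ : ℂ) • y, K.smul_mem _ hyK, norm_smul_inv_norm hy0, ?_⟩
  rw [map_smulₛₗ, hTy, ← Complex.ofReal_inv, Complex.conj_ofReal]

theorem exists_ne_zero_inner_map_self_eq_zero [FiniteDimensional ℂ E]
    (hT_inner : ∀ x y, ⟪T x, T y⟫_ℂ = ⟪y, x⟫_ℂ) (hT_inv : ∀ x, T (T x) = x)
    {K : Submodule ℂ E} (hK : ∀ x ∈ K, T x ∈ K) (hK2 : 2 ≤ finrank ℂ K) :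
    ∃ φ ∈ K, φ ≠ 0 ∧ ⟪φ, T φ⟫_ℂ = 0 := by
  obtain ⟨x, hxK, hx1, hTx⟩ :=
    exists_norm_eq_one_map_eq_self hT_inv hK (by rintro rfl; simp at hK2)
  have hx0 : x ≠ 0 := norm_ne_zero_iff.mp (by simp [hx1])
  set L := (ℂ ∙ x)ᗮ ⊓ K
  have hL : ∀ y ∈ L, T y ∈ L := by
    have hxT : ∀ y ∈ ℂ ∙ x, T y ∈ ℂ ∙ x := by
      intro y hy
      obtain ⟨c, rfl⟩ := mem_span_singleton.mp hy
      rw [map_smulₛₗ, hTx]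
      exact smul_mem _ _ (mem_span_singleton_self x)
    exact fun y hy => ⟨map_mem_orthogonal_of_antiunitary hT_inner hT_inv hxT y hy.1, hK y hy.2⟩
  have hL0 : L ≠ ⊥ := by
    have h : finrank ℂ (ℂ ∙ x) + finrank ℂ L = finrank ℂ K :=
      finrank_add_inf_finrank_orthogonal ((span_singleton_le_iff_mem x K).mpr hxK)
    rw [finrank_span_singleton hx0] at h
    rintro hL
    rw [hL, finrank_bot] at h
    omega
  obtain ⟨z, ⟨hzx, hzK⟩, hz1, hTz⟩ := exists_norm_eq_one_map_eq_self hT_inv hL hL0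
  have hxz : ⟪x, z⟫_ℂ = 0 := mem_orthogonal_singleton_iff_inner_right.mp hzx
  have hzx' : ⟪z, x⟫_ℂ = 0 := inner_eq_zero_symm.mp hxz
  refine ⟨x + Complex.I • z, K.add_mem hxK (K.smul_mem _ hzK), ?_, ?_⟩
  · intro h
    have h' := congrArg (⟪x, ·⟫_ℂ) h
    simp [hxz, inner_self_eq_norm_sq_to_K, hx1] at h'
  · rw [map_add, map_smulₛₗ, hTx, hTz, Complex.conj_I]
    simp [inner_add_left, inner_smul_left, inner_smul_right, hxz, hzx',
      inner_self_eq_norm_sq_to_K, hx1, hz1]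

theorem exists_eigenvector_inner_map_self_eq_zero [FiniteDimensional ℂ E] {A : E →ₗ[ℂ] E}
    (hA : A.IsSymmetric) (hT_inner : ∀ x y, ⟪T x, T y⟫_ℂ = ⟪y, x⟫_ℂ)
    (hT_inv : ∀ x, T (T x) = x) (hTA : ∀ x, T (A x) = -A (T x)) {W : Submodule ℂ E}
    (hWA : ∀ x ∈ W, A x ∈ W) (hWT : ∀ x ∈ W, T x ∈ W) (hW2 : 2 ≤ finrank ℂ W) :
    ∃ φ ∈ W, ‖φ‖ = 1 ∧ ⟪φ, T φ⟫_ℂ = 0 ∧ ∃ a : ℝ, A φ = (a : ℂ) • φ := by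
  have hS := hA.restrict_invariant hWA
  by_cases h : ∀ i, hS.eigenvalues rfl i = 0
  · have hAW : ∀ w ∈ W, A w = 0 := fun w hw =>
      congrArg Subtype.val (LinearMap.congr_fun (hS.eq_zero_of_eigenvalues_eq_zero rfl h) ⟨w, hw⟩)
    obtain ⟨φ, hφW, hφ0, hφT⟩ := exists_ne_zero_inner_map_self_eq_zero hT_inner hT_inv hWT hW2
    refine ⟨(‖φ‖⁻¹ : ℂ) • φ, W.smul_mem _ hφW, norm_smul_inv_norm hφ0, ?_, 0, ?_⟩
    · simp [hφT]
    · simp [hAW φ hφW]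
  · obtain ⟨i, hi⟩ := not_forall.mp h
    set b := hS.eigenvectorBasis rfl
    have hb : A (b i) = (hS.eigenvalues rfl i : ℂ) • (b i : E) :=
      congrArg Subtype.val (hS.apply_eigenvectorBasis rfl i)
    exact ⟨b i, (b i).2, b.orthonormal.norm_eq_one i,
      inner_map_self_eq_zero_of_apply_eq_smul hA hTA hi hb, _, hb⟩

theorem exists_orthonormal_sum_elim_eigenvectors [FiniteDimensional ℂ E] {A : E →ₗ[ℂ] E}
    (hA : A.IsSymmetric) (hT_inner : ∀ x y, ⟪T x, T y⟫_ℂ = ⟪y, x⟫_ℂ)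
    (hT_inv : ∀ x, T (T x) = x) (hTA : ∀ x, T (A x) = -A (T x)) {N : ℕ}
    (hdim : finrank ℂ E = 2 * N) :
    ∀ k ≤ N, ∃ (φ : Fin k → E) (a : Fin k → ℝ),
      Orthonormal ℂ (Sum.elim φ (fun i => T (φ i))) ∧ ∀ i, A (φ i) = (a i : ℂ) • φ i := by
  intro k
  induction k with
  | zero => exact fun _ => ⟨Fin.elim0, Fin.elim0, .of_isEmpty _, fun i => i.elim0⟩
  | succ k ih =>
    intro hk
    obtain ⟨φ, a, hφ, ha⟩ := ih (by omega)
    set P := span ℂ (Set.range (Sum.elim φ (fun i => T (φ i))))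
    have hφP : ∀ i, φ i ∈ P := fun i => subset_span ⟨.inl i, rfl⟩
    have hTφP : ∀ i, T (φ i) ∈ P := fun i => subset_span ⟨.inr i, rfl⟩
    have hPA : ∀ x ∈ P, A x ∈ P := by
      refine span_le (p := P.comap A) |>.mpr ?_
      rintro _ ⟨i | i, rfl⟩
      · show A (φ i) ∈ P
        rw [ha]
        exact smul_mem _ _ (hφP i)
      · show A (T (φ i)) ∈ P
        rw [apply_map_eq_neg_smul_of_anticomm hTA (ha i)]
        exact smul_mem _ _ (hTφP i)
    have hPT : ∀ x ∈ P, T x ∈ P := by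
      refine span_le (p := P.comap T) |>.mpr ?_
      rintro _ ⟨i | i, rfl⟩
      · exact hTφP i
      · show T (T (φ i)) ∈ P
        rw [hT_inv]
        exact hφP i
    have hW2 : 2 ≤ finrank ℂ Pᗮ := by
      have h := finrank_add_finrank_orthogonal P
      rw [finrank_span_eq_card hφ.linearIndependent, Fintype.card_sum, Fintype.card_fin,
        hdim] at h
      omega
    have hWT := map_mem_orthogonal_of_antiunitary hT_inner hT_inv hPT
    obtain ⟨φ₀, hφ₀, hφ₀1, hφ₀T, a₀, ha₀⟩ := exists_eigenvector_inner_map_self_eq_zero hA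
      hT_inner hT_inv hTA (hA.orthogonalComplement_mem_invtSubmodule hPA) hWT hW2
    refine ⟨Matrix.vecCons φ₀ φ, Matrix.vecCons a₀ a, orthonormal_sum_elim_map hT_inner ?_ ?_, ?_⟩
    · exact orthonormal_vecCons_iff.mpr ⟨hφ₀1,
        fun i => inner_left_of_mem_orthogonal (hφP i) hφ₀,
        hφ.comp _ Sum.inl_injective⟩
    · simp only [Fin.forall_fin_succ, Matrix.cons_val_zero, Matrix.cons_val_succ]
      exact ⟨⟨hφ₀T, fun j => inner_left_of_mem_orthogonal (hTφP j) hφ₀⟩,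
        fun i => ⟨inner_right_of_mem_orthogonal (hφP i) (hWT φ₀ hφ₀),
          fun j => hφ.inner_eq_zero Sum.inl_ne_inr⟩⟩
    · simp only [Fin.forall_fin_succ, Matrix.cons_val_zero, Matrix.cons_val_succ]
      exact ⟨ha₀, ha⟩

end Complex

/-- A Hermitian operator anticommuting with an antiunitary involution `T` on a
`2N`-dimensional complex Hilbert space admits an orthonormal basis
`φ₁, Tφ₁, …, φ_N, Tφ_N` with `A φᵢ = aᵢ φᵢ` and `A (Tφᵢ) = -aᵢ (Tφᵢ)`. -/
theorem stmt1 {V : Type*} [NormedAddCommGroup V] [InnerProductSpace ℂ V]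
    [FiniteDimensional ℂ V] (N : ℕ) (hdim : Module.finrank ℂ V = 2 * N)
    (A : V →ₗ[ℂ] V) (hA : ∀ x y : V, ⟪A x, y⟫_ℂ = ⟪x, A y⟫_ℂ)
    (T : V → V)
    (hT_add : ∀ x y : V, T (x + y) = T x + T y)
    (hT_smul : ∀ (c : ℂ) (x : V), T (c • x) = (starRingEnd ℂ) c • T x)
    (hT_inner : ∀ x y : V, ⟪T x, T y⟫_ℂ = ⟪y, x⟫_ℂ)
    (hT_inv : ∀ x : V, T (T x) = x)
    (hTA : ∀ x : V, T (A x) = - A (T x)) :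
    ∃ (φ : Fin N → V) (a : Fin N → ℝ),
      Orthonormal ℂ (Sum.elim φ (fun i => T (φ i))) ∧
      Submodule.span ℂ (Set.range (Sum.elim φ (fun i => T (φ i)))) = ⊤ ∧
      (∀ i, A (φ i) = (a i : ℂ) • φ i) ∧
      (∀ i, A (T (φ i)) = (-(a i) : ℂ) • T (φ i)) := by
  let T' : V →ₗ⋆[ℂ] V := { toFun := T, map_add' := hT_add, map_smul' := hT_smul }
  obtain ⟨φ, a, hφ, ha⟩ := exists_orthonormal_sum_elim_eigenvectors (T := T') hA hT_inner
    hT_inv hTA hdim N le_rfl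
  refine ⟨φ, a, hφ, hφ.linearIndependent.span_eq_top_of_card_eq_finrank' ?_, ha,
    fun i => apply_map_eq_neg_smul_of_anticomm (T := T') hTA (ha i)⟩
  simp [hdim, two_mul]
end

section
/- For the 3×3 Hermitian matrix ε = [[ε_x, ε_h, ε_s],[ε_h, ε_y, −iε_s],[ε_s, iε_s, ε_z]] with ε_x, ε_y, ε_z, ε_h, ε_s real, the 6×6 matrix H = [[ε, Δ],[Δ†, −ε]] with Δ = diag(Δ₃, −Δ₃, 0) and Δ₃ ≥ 0 real, restricted to the symmetric line where ε_x = ε_y, has det H = 0 if and only if Δ₃²·ε_z + det ε satisfies Δ₃² ε_z + det ε = 0. -/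
/-!
Multiplying on both sides by the unitriangular block matrix `[[1, 0], [i, 1]]` turns `[[A, B], [B, -A]]` into
`[[A + iB, B], [0, iB - A]]`, so `det H = det (ε + iΔ) * det (iΔ - ε)`. Adding `diag(d, -d, 0)` to a
`3 × 3` matrix changes its determinant by `d` times the difference of the first two diagonal
cofactors, minus `d² ε_z`; for `ε_x = ε_y` these cofactors agree, so with `d = ±iΔ₃` both factors
equal `±(Δ₃² ε_z + det ε)` and `det H = -(Δ₃² ε_z + det ε)²`.
-/

open Matrix

theorem Matrix.det_fromBlocks_neg_self {n R : Type*} [Fintype n] [DecidableEq n] [CommRing R]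
    (A B : Matrix n n R) {i : R} (hi : i * i = -1) :
    (fromBlocks A B B (-A)).det = (A + i • B).det * (i • B - A).det := by
  have hL : (fromBlocks (1 : Matrix n n R) 0 (i • (1 : Matrix n n R)) 1).det = 1 := by
    simp
  have hconj : fromBlocks (1 : Matrix n n R) 0 (i • 1) 1 * fromBlocks A B B (-A) *
      fromBlocks 1 0 (i • (1 : Matrix n n R)) 1 = fromBlocks (A + i • B) B 0 (i • B - A) := by
    simp only [fromBlocks_multiply, Matrix.mul_smul, Matrix.smul_mul, Matrix.one_mul,
      Matrix.mul_one, Matrix.zero_mul, Matrix.mul_zero]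
    congr 1
    · module
    · module
    · linear_combination (norm := module) hi • B
    · module
  rw [← det_fromBlocks_zero₂₁, ← hconj, det_mul, det_mul, hL, one_mul, mul_one]

theorem Matrix.det_add_diagonal_fin_three {R : Type*} [CommRing R]
    (A : Matrix (Fin 3) (Fin 3) R) (d : R) :
    (A + diagonal ![d, -d, 0]).det =
      A.det + d * (A.adjugate 0 0 - A.adjugate 1 1) - d ^ 2 * A 2 2 := by
  simp [det_fin_three, adjugate_fin_three]
  ring

theorem stmt7_general (εx εy εz εh εs Δ3 : ℝ) (hxy : εx = εy) :
    ((Matrix.fromBlocks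
        (!![(εx : ℂ), εh, εs; εh, εy, -Complex.I * εs; εs, Complex.I * εs, εz])
        (Matrix.diagonal ![(Δ3 : ℂ), -(Δ3 : ℂ), 0])
        (Matrix.diagonal ![(Δ3 : ℂ), -(Δ3 : ℂ), 0])ᴴ
        (-(!![(εx : ℂ), εh, εs; εh, εy, -Complex.I * εs; εs, Complex.I * εs, εz]))).det = 0
      ↔ (Δ3 : ℂ) ^ 2 * (εz : ℂ) +
          (!![(εx : ℂ), εh, εs; εh, εy, -Complex.I * εs; εs, Complex.I * εs, εz]).det = 0) := by
  set ε : Matrix (Fin 3) (Fin 3) ℂ :=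
    !![(εx : ℂ), εh, εs; εh, εy, -Complex.I * εs; εs, Complex.I * εs, εz]
  set Δ : Matrix (Fin 3) (Fin 3) ℂ := diagonal ![(Δ3 : ℂ), -(Δ3 : ℂ), 0]
  have hΔ : Δᴴ = Δ := by
    rw [diagonal_conjTranspose]
    congr 1
    ext i
    fin_cases i <;> simp
  have hadj : ε.adjugate 0 0 = ε.adjugate 1 1 := by
    simp only [ε, adjugate_fin_three, hxy, of_apply, cons_val', cons_val_zero, cons_val_one,
      cons_val, cons_val_fin_one]
    linear_combination (εs : ℂ) ^ 2 * Complex.I_sq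
  have hdet {d : ℂ} (hd : d ^ 2 = -1) : (ε + d • Δ).det = Δ3 ^ 2 * εz + ε.det := by
    have hdΔ : d • Δ = diagonal ![d * Δ3, -(d * Δ3), 0] := by
      rw [← diagonal_smul]
      congr 1
      ext i
      fin_cases i <;> simp
    rw [hdΔ, det_add_diagonal_fin_three, hadj, sub_self, mul_zero, add_zero, mul_pow, hd]
    have hεz : ε 2 2 = εz := rfl
    rw [hεz]
    ring
  rw [hΔ, det_fromBlocks_neg_self ε Δ Complex.I_mul_I, ← neg_sub, det_neg, sub_eq_add_neg,
    ← neg_smul, hdet Complex.I_sq, hdet (by rw [neg_sq, Complex.I_sq])]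
  simp

/-- Nodal equation along the (110) direction with spin-orbit coupling:
`det H = 0 ↔ Δ₃² ε_z + det ε = 0`. -/
theorem stmt7 (εx εy εz εh εs Δ3 : ℝ) (hxy : εx = εy) (hΔ : 0 ≤ Δ3) :
    ((Matrix.fromBlocks
        (!![(εx : ℂ), εh, εs; εh, εy, -Complex.I * εs; εs, Complex.I * εs, εz])
        (Matrix.diagonal ![(Δ3 : ℂ), -(Δ3 : ℂ), 0])
        (Matrix.diagonal ![(Δ3 : ℂ), -(Δ3 : ℂ), 0])ᴴ
        (-(!![(εx : ℂ), εh, εs; εh, εy, -Complex.I * εs; εs, Complex.I * εs, εz]))).det = 0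
      ↔ (Δ3 : ℂ) ^ 2 * (εz : ℂ) +
          (!![(εx : ℂ), εh, εs; εh, εy, -Complex.I * εs; εs, Complex.I * εs, εz]).det = 0) :=
  stmt7_general εx εy εz εh εs Δ3 hxy
end

section
/- Let H be a Hermitian matrix of the form H = [[ε₊, 0, 0, Δ],[0, ε₋, −Δ, 0],[0, −Δ̄, −ε₊, 0],[Δ̄, 0, 0, −ε₋]] with ε₊, ε₋ real and Δ complex. Then H has a zero eigenvalue if and only if |Δ|² + ε₊ε₋ = 0. -/
/-!
In the basis order `(1, 4, 2, 3)` the Hamiltonian is block diagonal with blocks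
`[[ε₊, Δ], [Δ̄, -ε₋]]` and `[[ε₋, -Δ], [-Δ̄, -ε₊]]`, both of determinant `-(|Δ|² + ε₊ε₋)`.
Hence `det H = (|Δ|² + ε₊ε₋)²`, and a zero mode exists exactly when this determinant vanishes.
-/

open Matrix

def pseudospinBdG {R : Type*} [Ring R] (εp εm Δ Δ' : R) : Matrix (Fin 4) (Fin 4) R :=
  !![εp, 0, 0, Δ;
     0, εm, -Δ, 0;
     0, -Δ', -εp, 0;
     Δ', 0, 0, -εm]

theorem det_pseudospinBdG {R : Type*} [CommRing R] (εp εm Δ Δ' : R) :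
    (pseudospinBdG εp εm Δ Δ').det = (Δ * Δ' + εp * εm) ^ 2 := by
  simp [pseudospinBdG, det_succ_row_zero, Fin.sum_univ_succ, Fin.succAbove]
  ring

/-- The effective 2-pseudospin-band BdG Hamiltonian has a zero mode iff
`|Δ|² + ε₊ε₋ = 0` (the Bogoliubov Fermi surface equation). -/
theorem stmt9 (εp εm : ℝ) (Δ : ℂ) :
    ((∃ v : Fin 4 → ℂ, v ≠ 0 ∧
        (!![(εp : ℂ), 0, 0, Δ;
            0, (εm : ℂ), -Δ, 0;
            0, -(starRingEnd ℂ) Δ, -(εp : ℂ), 0;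
            (starRingEnd ℂ) Δ, 0, 0, -(εm : ℂ)] : Matrix (Fin 4) (Fin 4) ℂ).mulVec v = 0)
      ↔ Complex.normSq Δ + εp * εm = 0) := by
  change (∃ v, v ≠ 0 ∧ pseudospinBdG (εp : ℂ) εm Δ (starRingEnd ℂ Δ) *ᵥ v = 0) ↔ _
  rw [exists_mulVec_eq_zero_iff, det_pseudospinBdG, Complex.mul_conj, pow_eq_zero_iff two_ne_zero]
  exact_mod_cast Iff.rfl
end

section
/- With notation as above, setting θ such that cos θ = h/r, sin θ = g/r, and U = cos(θ/2) I₄ + i sin(θ/2)·(a σ₀₂ + b σ₃₁ + c σ₂₁ + d σ₁₁)/g, the matrix U is unitary and U M U† = r σ₀₃, where M = h σ₀₃ + a σ₀₁ − b σ₃₂ − c σ₂₂ − d σ₁₂. -/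
open Matrix
open scoped Kronecker

/-! With `N = (aσ₀₂ + bσ₃₁ + cσ₂₁ + dσ₁₁)/g`, the four Kronecker products pairwise anticommute and
square to `1`, so `N` is Hermitian with `N² = 1`. Hence `rotor φ N = cos φ + i sin φ N = exp(iφN)`
is unitary and these exponentials multiply by adding angles; `U = rotor (θ/2) N`.
Moreover `N σ₀₃ = i(aσ₀₁ − bσ₃₂ − cσ₂₂ − dσ₁₂)/g`, so `M = r (cos θ − i sin θ N) σ₀₃ = r U†² σ₀₃`.
Since `N` anticommutes with `σ₀₃`, moving `σ₀₃` past `U†` turns it into `U`, and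
`U M U† = r U U†² U σ₀₃ = r σ₀₃`. -/

section Rotor

open Complex

variable {R : Type*} [Ring R] [Algebra ℂ R]

noncomputable def rotor (θ : ℝ) (N : R) : R := (Real.cos θ : ℂ) • 1 + (I * Real.sin θ) • N

variable {N : R}

lemma rotor_zero : rotor 0 N = 1 := by simp [rotor]

lemma rotor_mul_rotor (hN : N * N = 1) (θ φ : ℝ) :
    rotor θ N * rotor φ N = rotor (θ + φ) N := by
  have hI (x y : ℂ) : I * x * (I * y) = -(x * y) := by linear_combination x * y * I_sq
  simp only [rotor, add_mul, mul_add, smul_mul_smul_comm, one_mul, mul_one, hN, hI,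
    Real.cos_add, Real.sin_add]
  push_cast
  module

lemma star_rotor [StarRing R] [StarModule ℂ R] (hN : IsSelfAdjoint N) (θ : ℝ) :
    star (rotor θ N) = rotor (-θ) N := by
  simp only [rotor, star_add, star_smul, star_one, hN.star_eq, star_def, map_mul,
    conj_ofReal, conj_I, Real.cos_neg, Real.sin_neg, ofReal_neg]
  module

lemma rotor_mem_unitary [StarRing R] [StarModule ℂ R] (hN : IsSelfAdjoint N) (hN2 : N * N = 1)
    (θ : ℝ) : rotor θ N ∈ unitary R := by
  refine ⟨?_, ?_⟩ <;> simp [star_rotor hN, rotor_mul_rotor hN2, rotor_zero]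

lemma mul_rotor_of_anticommute {Z : R} (hNZ : N * Z = -(Z * N)) (θ : ℝ) :
    Z * rotor θ N = rotor (-θ) N * Z := by
  simp only [rotor, mul_add, add_mul, mul_smul_comm, smul_mul_assoc, mul_one, one_mul, hNZ,
    Real.cos_neg, Real.sin_neg]
  push_cast
  module

lemma rotor_half_mul_rotor_neg_mul_mul_rotor_neg_half {Z : R} (hN : N * N = 1)
    (hNZ : N * Z = -(Z * N)) (θ : ℝ) :
    rotor (θ / 2) N * (rotor (-θ) N * Z) * rotor (-(θ / 2)) N = Z := by
  rw [mul_assoc, mul_assoc, mul_rotor_of_anticommute hNZ, neg_neg, ← mul_assoc, ← mul_assoc,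
    rotor_mul_rotor hN, rotor_mul_rotor hN]
  ring_nf
  rw [rotor_zero, one_mul]

end Rotor

namespace Pauli

open Complex

def σ₁ : Matrix (Fin 2) (Fin 2) ℂ := !![0, 1; 1, 0]
def σ₂ : Matrix (Fin 2) (Fin 2) ℂ := !![0, -I; I, 0]
def σ₃ : Matrix (Fin 2) (Fin 2) ℂ := !![1, 0; 0, -1]

lemma σ₁_mul_σ₁ : σ₁ * σ₁ = 1 := by
  ext i j; fin_cases i <;> fin_cases j <;> simp [σ₁, mul_apply]
lemma σ₂_mul_σ₂ : σ₂ * σ₂ = 1 := by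
  ext i j; fin_cases i <;> fin_cases j <;> simp [σ₂, mul_apply]
lemma σ₃_mul_σ₃ : σ₃ * σ₃ = 1 := by
  ext i j; fin_cases i <;> fin_cases j <;> simp [σ₃, mul_apply]
lemma σ₁_mul_σ₂ : σ₁ * σ₂ = I • σ₃ := by
  ext i j; fin_cases i <;> fin_cases j <;> simp [σ₁, σ₂, σ₃, mul_apply]
lemma σ₂_mul_σ₁ : σ₂ * σ₁ = -I • σ₃ := by
  ext i j; fin_cases i <;> fin_cases j <;> simp [σ₁, σ₂, σ₃, mul_apply]
lemma σ₂_mul_σ₃ : σ₂ * σ₃ = I • σ₁ := by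
  ext i j; fin_cases i <;> fin_cases j <;> simp [σ₁, σ₂, σ₃, mul_apply]
lemma σ₃_mul_σ₂ : σ₃ * σ₂ = -I • σ₁ := by
  ext i j; fin_cases i <;> fin_cases j <;> simp [σ₁, σ₂, σ₃, mul_apply]
lemma σ₃_mul_σ₁ : σ₃ * σ₁ = I • σ₂ := by
  ext i j; fin_cases i <;> fin_cases j <;> simp [σ₁, σ₂, σ₃, mul_apply]
lemma σ₁_mul_σ₃ : σ₁ * σ₃ = -I • σ₂ := by
  ext i j; fin_cases i <;> fin_cases j <;> simp [σ₁, σ₂, σ₃, mul_apply]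

lemma conjTranspose_σ₁ : σ₁ᴴ = σ₁ := by
  ext i j; fin_cases i <;> fin_cases j <;> simp [σ₁]
lemma conjTranspose_σ₂ : σ₂ᴴ = σ₂ := by
  ext i j; fin_cases i <;> fin_cases j <;> simp [σ₂]
lemma conjTranspose_σ₃ : σ₃ᴴ = σ₃ := by
  ext i j; fin_cases i <;> fin_cases j <;> simp [σ₃]

abbrev σ₀ : Matrix (Fin 2) (Fin 2) ℂ := 1

def clifford4 (a b c d : ℝ) : Matrix (Fin 2 × Fin 2) (Fin 2 × Fin 2) ℂ :=
  (a : ℂ) • (σ₀ ⊗ₖ σ₂) + (b : ℂ) • (σ₃ ⊗ₖ σ₁) + (c : ℂ) • (σ₂ ⊗ₖ σ₁) + (d : ℂ) • (σ₁ ⊗ₖ σ₁)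

def hamiltonian (h a b c d : ℝ) : Matrix (Fin 2 × Fin 2) (Fin 2 × Fin 2) ℂ :=
  (h : ℂ) • (σ₀ ⊗ₖ σ₃) + (a : ℂ) • (σ₀ ⊗ₖ σ₁) - (b : ℂ) • (σ₃ ⊗ₖ σ₂)
    - (c : ℂ) • (σ₂ ⊗ₖ σ₂) - (d : ℂ) • (σ₁ ⊗ₖ σ₂)

lemma clifford4_mul_self (a b c d : ℝ) :
    clifford4 a b c d * clifford4 a b c d = ((a ^ 2 + b ^ 2 + c ^ 2 + d ^ 2 : ℝ) : ℂ) • 1 := by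
  simp only [clifford4, add_mul, mul_add, smul_mul_smul_comm, ← mul_kronecker_mul, mul_one, one_mul,
    σ₁_mul_σ₁, σ₂_mul_σ₂, σ₃_mul_σ₃, σ₁_mul_σ₂, σ₂_mul_σ₁, σ₂_mul_σ₃, σ₃_mul_σ₂, σ₃_mul_σ₁,
    σ₁_mul_σ₃, smul_kronecker, kronecker_smul, one_kronecker_one]
  push_cast
  module

lemma clifford4_mul_σ₀₃ (a b c d : ℝ) :
    clifford4 a b c d * (σ₀ ⊗ₖ σ₃) = -((σ₀ ⊗ₖ σ₃) * clifford4 a b c d) := by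
  simp only [clifford4, add_mul, mul_add, smul_mul_assoc, mul_smul_comm, ← mul_kronecker_mul,
    mul_one, one_mul, σ₁_mul_σ₃, σ₂_mul_σ₃, σ₃_mul_σ₁, σ₃_mul_σ₂, kronecker_smul]
  module

lemma isSelfAdjoint_clifford4 (a b c d : ℝ) : IsSelfAdjoint (clifford4 a b c d) := by
  simp [IsSelfAdjoint, clifford4, star_eq_conjTranspose, conjTranspose_kronecker,
    conjTranspose_σ₁, conjTranspose_σ₂, conjTranspose_σ₃]

lemma hamiltonian_eq (h a b c d : ℝ) :
    hamiltonian h a b c d = (h : ℂ) • (σ₀ ⊗ₖ σ₃) - I • (clifford4 a b c d * (σ₀ ⊗ₖ σ₃)) := by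
  simp only [hamiltonian, clifford4, add_mul, smul_mul_assoc, ← mul_kronecker_mul, mul_one,
    σ₁_mul_σ₃, σ₂_mul_σ₃, kronecker_smul]
  linear_combination (norm := module) I_sq •
    ((a : ℂ) • (σ₀ ⊗ₖ σ₁) - (b : ℂ) • (σ₃ ⊗ₖ σ₂) - (c : ℂ) • (σ₂ ⊗ₖ σ₂) - (d : ℂ) • (σ₁ ⊗ₖ σ₂))

lemma inv_smul_clifford4_mul_self {a b c d g : ℝ} (hg : a ^ 2 + b ^ 2 + c ^ 2 + d ^ 2 = g ^ 2)
    (hg0 : g ≠ 0) : ((g : ℂ)⁻¹ • clifford4 a b c d) * ((g : ℂ)⁻¹ • clifford4 a b c d) = 1 := by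
  have hgC : (g : ℂ) ≠ 0 := ofReal_ne_zero.mpr hg0
  rw [smul_mul_smul_comm, clifford4_mul_self, hg, smul_smul]
  push_cast
  rw [show ((g : ℂ)⁻¹ * (g : ℂ)⁻¹ * (g : ℂ) ^ 2) = 1 by field_simp, one_smul]

lemma isSelfAdjoint_inv_smul_clifford4 (a b c d g : ℝ) :
    IsSelfAdjoint ((g : ℂ)⁻¹ • clifford4 a b c d) :=
  .smul ((im_eq_zero_iff_isSelfAdjoint _).mp (by simp)) (isSelfAdjoint_clifford4 a b c d)

lemma hamiltonian_eq_smul_rotor_mul {h a b c d g r θ : ℝ} (hh : r * Real.cos θ = h)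
    (hgr : r * Real.sin θ = g) (hg0 : g ≠ 0) :
    hamiltonian h a b c d = (r : ℂ) • (rotor (-θ) ((g : ℂ)⁻¹ • clifford4 a b c d) * (σ₀ ⊗ₖ σ₃)) := by
  have hgr : (r : ℂ) * Real.sin θ / g = 1 := by
    rw [← ofReal_mul, hgr, div_self (ofReal_ne_zero.mpr hg0)]
  rw [hamiltonian_eq, ← hh]
  simp only [rotor, Real.cos_neg, Real.sin_neg, ofReal_neg, ofReal_mul, add_mul, smul_mul_assoc,
    one_mul]
  linear_combination (norm := module) (I * hgr) • (clifford4 a b c d * (σ₀ ⊗ₖ σ₃))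

end Pauli

open Pauli Complex in
theorem stmt13_general (a b c d h : ℝ)
    (g : ℝ) (hg : g = Real.sqrt (a ^ 2 + b ^ 2 + c ^ 2 + d ^ 2)) (hgpos : 0 < g)
    (r : ℝ)
    (θ : ℝ) (hcos : Real.cos θ = h / r) (hsin : Real.sin θ = g / r) :
    letI σ0 : Matrix (Fin 2) (Fin 2) ℂ := 1
    letI σ1 : Matrix (Fin 2) (Fin 2) ℂ := !![0, 1; 1, 0]
    letI σ2 : Matrix (Fin 2) (Fin 2) ℂ := !![0, -Complex.I; Complex.I, 0]
    letI σ3 : Matrix (Fin 2) (Fin 2) ℂ := !![1, 0; 0, -1]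
    letI M : Matrix (Fin 2 × Fin 2) (Fin 2 × Fin 2) ℂ :=
      (h : ℂ) • (σ0 ⊗ₖ σ3) + (a : ℂ) • (σ0 ⊗ₖ σ1) - (b : ℂ) • (σ3 ⊗ₖ σ2)
        - (c : ℂ) • (σ2 ⊗ₖ σ2) - (d : ℂ) • (σ1 ⊗ₖ σ2)
    letI U : Matrix (Fin 2 × Fin 2) (Fin 2 × Fin 2) ℂ :=
      (Real.cos (θ / 2) : ℂ) • 1 +
        (Complex.I * Real.sin (θ / 2) / g) •
          ((a : ℂ) • (σ0 ⊗ₖ σ2) + (b : ℂ) • (σ3 ⊗ₖ σ1) + (c : ℂ) • (σ2 ⊗ₖ σ1)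
            + (d : ℂ) • (σ1 ⊗ₖ σ1))
    U ∈ Matrix.unitaryGroup (Fin 2 × Fin 2) ℂ ∧ U * M * Uᴴ = (r : ℂ) • (σ0 ⊗ₖ σ3) := by
  have hr : r ≠ 0 := by
    rintro rfl
    simpa [hcos, hsin] using Real.sin_sq_add_cos_sq θ
  have hsum : a ^ 2 + b ^ 2 + c ^ 2 + d ^ 2 = g ^ 2 := by rw [hg, Real.sq_sqrt (by positivity)]
  set N := (g : ℂ)⁻¹ • clifford4 a b c d
  have hN2 : N * N = 1 := inv_smul_clifford4_mul_self hsum hgpos.ne'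
  have hN : IsSelfAdjoint N := isSelfAdjoint_inv_smul_clifford4 a b c d g
  have hNZ : N * (σ₀ ⊗ₖ σ₃) = -((σ₀ ⊗ₖ σ₃) * N) := by
    rw [smul_mul_assoc, clifford4_mul_σ₀₃, mul_smul_comm, smul_neg]
  have hU : rotor (θ / 2) N =
      (Real.cos (θ / 2) : ℂ) • 1 + (I * Real.sin (θ / 2) / g) • clifford4 a b c d := by
    rw [rotor, smul_smul, ← div_eq_mul_inv]
  have hM : hamiltonian h a b c d = (r : ℂ) • (rotor (-θ) N * (σ₀ ⊗ₖ σ₃)) :=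
    hamiltonian_eq_smul_rotor_mul (by rw [hcos, mul_div_cancel₀ _ hr])
      (by rw [hsin, mul_div_cancel₀ _ hr]) hgpos.ne'
  have hconj : rotor (θ / 2) N * ((r : ℂ) • (rotor (-θ) N * (σ₀ ⊗ₖ σ₃))) * (rotor (θ / 2) N)ᴴ
      = (r : ℂ) • (σ₀ ⊗ₖ σ₃) := by
    rw [← star_eq_conjTranspose, star_rotor hN, mul_smul_comm, smul_mul_assoc,
      rotor_half_mul_rotor_neg_mul_mul_rotor_neg_half hN2 hNZ]
  rw [hU, ← hM] at hconj
  exact ⟨hU ▸ rotor_mem_unitary hN hN2 (θ / 2), hconj⟩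

/-- The unitary `U = cos(θ/2) I + i sin(θ/2) (aσ₀₂+bσ₃₁+cσ₂₁+dσ₁₁)/g` diagonalizes
`M = hσ₀₃ + aσ₀₁ − bσ₃₂ − cσ₂₂ − dσ₁₂` into `r σ₀₃`. -/
theorem stmt13 (a b c d h : ℝ)
    (g : ℝ) (hg : g = Real.sqrt (a ^ 2 + b ^ 2 + c ^ 2 + d ^ 2)) (hgpos : 0 < g)
    (r : ℝ) (hr : r = Real.sqrt (h ^ 2 + g ^ 2))
    (θ : ℝ) (hcos : Real.cos θ = h / r) (hsin : Real.sin θ = g / r) :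
    letI σ0 : Matrix (Fin 2) (Fin 2) ℂ := 1
    letI σ1 : Matrix (Fin 2) (Fin 2) ℂ := !![0, 1; 1, 0]
    letI σ2 : Matrix (Fin 2) (Fin 2) ℂ := !![0, -Complex.I; Complex.I, 0]
    letI σ3 : Matrix (Fin 2) (Fin 2) ℂ := !![1, 0; 0, -1]
    letI M : Matrix (Fin 2 × Fin 2) (Fin 2 × Fin 2) ℂ :=
      (h : ℂ) • (σ0 ⊗ₖ σ3) + (a : ℂ) • (σ0 ⊗ₖ σ1) - (b : ℂ) • (σ3 ⊗ₖ σ2)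
        - (c : ℂ) • (σ2 ⊗ₖ σ2) - (d : ℂ) • (σ1 ⊗ₖ σ2)
    letI U : Matrix (Fin 2 × Fin 2) (Fin 2 × Fin 2) ℂ :=
      (Real.cos (θ / 2) : ℂ) • 1 +
        (Complex.I * Real.sin (θ / 2) / g) •
          ((a : ℂ) • (σ0 ⊗ₖ σ2) + (b : ℂ) • (σ3 ⊗ₖ σ1) + (c : ℂ) • (σ2 ⊗ₖ σ1)
            + (d : ℂ) • (σ1 ⊗ₖ σ1))
    U ∈ Matrix.unitaryGroup (Fin 2 × Fin 2) ℂ ∧ U * M * Uᴴ = (r : ℂ) • (σ0 ⊗ₖ σ3) :=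
  stmt13_general a b c d h g hg hgpos r θ hcos hsin
end

section
/- (Weyl's inequality for a perturbation) Let A and B be Hermitian operators on an N-dimensional complex Hilbert space, and let E¹(·) ≤ ... ≤ Eᴺ(·) denote eigenvalues in nondecreasing order with multiplicity. Then |Eⁿ(A+B) − Eⁿ(A)| ≤ ‖B‖ for every n = 1, ..., N, where ‖B‖ is the operator norm. -/
/-!
Courant–Fischer dimension count. Let `S` and `T` have orthonormal eigenbases with nondecreasing
eigenvalues `a` and `b`. The span of the first `i + 1` eigenvectors of `S` and the span of the last
`N - i` eigenvectors of `T` have dimensions adding up to `N + 1`, so they share a nonzero vector `x`.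
Its Rayleigh quotient is at most `a i` for `S` and at least `b i` for `T`, and the two quotients
differ by at most `‖T - S‖`; hence `b i ≤ a i + ‖T - S‖`, and symmetrically. For Hermitian
matrices the characteristic polynomial determines the eigenvalues up to a permutation, which
reindexes the eigenvector basis of the spectral theorem to match `a`.
-/

open Matrix Polynomial Module Submodule

theorem Equiv.exists_comp_eq_of_map_univ_eq {ι α : Type*} [Fintype ι] [DecidableEq α]
    {f g : ι → α} (h : Finset.univ.val.map f = Finset.univ.val.map g) :
    ∃ σ : ι ≃ ι, g ∘ σ = f := by
  have hcard : ∀ c, Fintype.card {i // f i = c} = Fintype.card {i // g i = c} := by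
    intro c
    simpa [Fintype.card_subtype, Finset.card_def, Finset.filter_val, Multiset.count_map,
      eq_comm] using congrArg (Multiset.count c) h
  exact ⟨Equiv.ofFiberEquiv fun c ↦ Fintype.equivOfCardEq (hcard c),
    funext (Equiv.ofFiberEquiv_map _)⟩

theorem Submodule.exists_mem_inf_ne_zero_of_finrank_lt {K V : Type*} [DivisionRing K]
    [AddCommGroup V] [Module K V] [FiniteDimensional K V] (W₁ W₂ : Submodule K V)
    (h : finrank K V < finrank K W₁ + finrank K W₂) : ∃ x ∈ W₁, x ∈ W₂ ∧ x ≠ 0 := by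
  have hpos : 0 < finrank K ↥(W₁ ⊓ W₂) := by
    have := finrank_sup_add_finrank_inf_eq W₁ W₂
    have := (W₁ ⊔ W₂).finrank_le
    omega
  obtain ⟨⟨x, hx₁, hx₂⟩, hx⟩ := finrank_pos_iff_exists_ne_zero.mp hpos
  exact ⟨x, hx₁, hx₂, fun h ↦ hx (Subtype.ext h)⟩

namespace OrthonormalBasis

variable {𝕜 E ι : Type*} [RCLike 𝕜] [NormedAddCommGroup E] [InnerProductSpace 𝕜 E]
  [Fintype ι] (u : OrthonormalBasis ι 𝕜 E)

theorem inner_eq_zero_of_mem_span_image {s : Set ι} {x : E} (hx : x ∈ span 𝕜 (u '' s))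
    {j : ι} (hj : j ∉ s) : inner 𝕜 (u j) x = 0 := by
  induction hx using span_induction with
  | mem y hy =>
    obtain ⟨k, hk, rfl⟩ := hy
    exact u.orthonormal.2 (ne_of_mem_of_not_mem hk hj).symm
  | zero => exact inner_zero_right _
  | add y z _ _ hy hz => rw [inner_add_right, hy, hz, add_zero]
  | smul c y _ hy => rw [inner_smul_right, hy, mul_zero]

theorem finrank_span_image (s : Set ι) [Fintype s] :
    finrank 𝕜 (span 𝕜 (u '' s)) = Fintype.card s := by
  have := finrank_span_eq_card
    (u.orthonormal.comp ((↑) : s → ι) Subtype.val_injective).linearIndependent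
  rwa [Set.range_comp, Subtype.range_coe] at this

variable {u} {T : E →ₗ[𝕜] E} {μ : ι → ℝ}

theorem inner_apply_eq_mul_inner (hT : ∀ j, T (u j) = (μ j : 𝕜) • u j) (i : ι) (x : E) :
    inner 𝕜 (u i) (T x) = μ i * inner 𝕜 (u i) x := by
  have hTx : T x = ∑ j, ((μ j : 𝕜) * inner 𝕜 (u j) x) • u j := by
    conv_lhs => rw [← u.sum_repr' x]
    simp only [map_sum, map_smul, hT, smul_smul, mul_comm]
  rw [hTx, u.orthonormal.inner_right_fintype]

theorem re_inner_apply_self_eq_sum (hT : ∀ j, T (u j) = (μ j : 𝕜) • u j) (x : E) :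
    RCLike.re (inner 𝕜 x (T x)) = ∑ j, μ j * ‖inner 𝕜 (u j) x‖ ^ 2 := by
  rw [← u.sum_inner_mul_inner, map_sum]
  refine Finset.sum_congr rfl fun j _ ↦ ?_
  rw [inner_apply_eq_mul_inner hT, ← inner_conj_symm, mul_left_comm, RCLike.conj_mul]
  norm_cast

variable [Preorder ι] (hμ : Monotone μ) (hT : ∀ j, T (u j) = (μ j : 𝕜) • u j) (i : ι)
include hμ hT

theorem re_inner_apply_self_le_of_mem_span_Iic {x : E} (hx : x ∈ span 𝕜 (u '' Set.Iic i)) :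
    RCLike.re (inner 𝕜 x (T x)) ≤ μ i * ‖x‖ ^ 2 := by
  rw [re_inner_apply_self_eq_sum hT, ← u.sum_sq_norm_inner_right, Finset.mul_sum]
  refine Finset.sum_le_sum fun j _ ↦ ?_
  by_cases hj : j ≤ i
  · exact mul_le_mul_of_nonneg_right (hμ hj) (by positivity)
  · simp [u.inner_eq_zero_of_mem_span_image hx (s := Set.Iic i) hj]

theorem le_re_inner_apply_self_of_mem_span_Ici {x : E} (hx : x ∈ span 𝕜 (u '' Set.Ici i)) :
    μ i * ‖x‖ ^ 2 ≤ RCLike.re (inner 𝕜 x (T x)) := by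
  rw [re_inner_apply_self_eq_sum hT, ← u.sum_sq_norm_inner_right, Finset.mul_sum]
  refine Finset.sum_le_sum fun j _ ↦ ?_
  by_cases hj : i ≤ j
  · exact mul_le_mul_of_nonneg_right (hμ hj) (by positivity)
  · simp [u.inner_eq_zero_of_mem_span_image hx (s := Set.Ici i) hj]

end OrthonormalBasis

section Weyl

variable {𝕜 E : Type*} [RCLike 𝕜] [NormedAddCommGroup E] [InnerProductSpace 𝕜 E] {n : ℕ}
  {S T : E →L[𝕜] E} {a b : Fin n → ℝ} (ha : Monotone a) (hb : Monotone b)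
  {u w : OrthonormalBasis (Fin n) 𝕜 E} (hu : ∀ j, S (u j) = (a j : 𝕜) • u j)
  (hw : ∀ j, T (w j) = (b j : 𝕜) • w j)
include ha hb hu hw

theorem OrthonormalBasis.le_add_opNorm_sub_of_apply_eq_smul (i : Fin n) :
    b i ≤ a i + ‖T - S‖ := by
  have : FiniteDimensional 𝕜 E := u.toBasis.finiteDimensional_of_finite
  have hdim : finrank 𝕜 E < finrank 𝕜 (span 𝕜 (u '' Set.Iic i)) +
      finrank 𝕜 (span 𝕜 (w '' Set.Ici i)) := by
    rw [u.finrank_span_image, w.finrank_span_image, Fintype.card_Iic, Fintype.card_Ici,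
      Fin.card_Iic, Fin.card_Ici, finrank_eq_card_basis u.toBasis, Fintype.card_fin]
    omega
  obtain ⟨x, hxu, hxw, hx⟩ := exists_mem_inf_ne_zero_of_finrank_lt _ _ hdim
  have hdiff : RCLike.re (inner 𝕜 x ((T - S) x)) ≤ ‖T - S‖ * ‖x‖ ^ 2 :=
    calc RCLike.re (inner 𝕜 x ((T - S) x)) ≤ ‖x‖ * ‖(T - S) x‖ := re_inner_le_norm _ _
      _ ≤ ‖x‖ * (‖T - S‖ * ‖x‖) := by gcongr; exact (T - S).le_opNorm x
      _ = ‖T - S‖ * ‖x‖ ^ 2 := by ring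
  have hsplit : RCLike.re (inner 𝕜 x (T x)) =
      RCLike.re (inner 𝕜 x (S x)) + RCLike.re (inner 𝕜 x ((T - S) x)) := by
    simp only [_root_.sub_apply, inner_sub_right, map_sub]
    ring
  have hT := w.le_re_inner_apply_self_of_mem_span_Ici (T := T.toLinearMap) hb hw i hxw
  have hS := u.re_inner_apply_self_le_of_mem_span_Iic (T := S.toLinearMap) ha hu i hxu
  rw [ContinuousLinearMap.coe_coe] at hT hS
  refine le_of_mul_le_mul_right ?_ (by positivity : 0 < ‖x‖ ^ 2)
  linarith

theorem OrthonormalBasis.abs_sub_le_opNorm_sub_of_apply_eq_smul (i : Fin n) :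
    |b i - a i| ≤ ‖T - S‖ := by
  have := u.le_add_opNorm_sub_of_apply_eq_smul ha hb hu hw i
  have := w.le_add_opNorm_sub_of_apply_eq_smul hb ha hw hu i
  rw [norm_sub_rev] at this
  exact abs_sub_le_iff.2 ⟨by linarith, by linarith⟩

end Weyl

theorem Matrix.IsHermitian.exists_orthonormalBasis_toEuclideanCLM_apply_eq_smul
    {𝕜 n : Type*} [RCLike 𝕜] [Fintype n] [DecidableEq n] {M : Matrix n n 𝕜} (hM : M.IsHermitian)
    {a : n → ℝ} (h : M.charpoly = ∏ i, (X - C (a i : 𝕜))) :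
    ∃ u : OrthonormalBasis n 𝕜 (EuclideanSpace 𝕜 n),
      ∀ j, toEuclideanCLM (𝕜 := 𝕜) M (u j) = (a j : 𝕜) • u j := by
  have hroots : ∀ f : n → 𝕜, (∏ i, (X - C (f i))).roots = Finset.univ.val.map f := fun f ↦ by
    rw [roots_prod _ _ (by simp [Finset.prod_ne_zero_iff, X_sub_C_ne_zero])]
    simp
  obtain ⟨σ, hσ⟩ := Equiv.exists_comp_eq_of_map_univ_eq
    (f := fun i ↦ (a i : 𝕜)) (g := fun i ↦ (hM.eigenvalues i : 𝕜))
    (by rw [← hroots, ← hroots, ← h, hM.charpoly_eq])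
  refine ⟨hM.eigenvectorBasis.reindex σ.symm, fun j ↦ ?_⟩
  rw [OrthonormalBasis.reindex_apply, Equiv.symm_symm, ← congrFun hσ j]
  apply WithLp.ofLp_injective
  rw [ofLp_toEuclideanCLM, hM.mulVec_eigenvectorBasis, WithLp.ofLp_smul, Function.comp_apply,
    RCLike.real_smul_eq_coe_smul (K := 𝕜)]

/-- Weyl's inequality: the `n`-th eigenvalues (in nondecreasing order, with multiplicity) of the
Hermitian matrices `A` and `A + B` differ by at most the operator norm of `B`. -/
theorem stmt15 {N : ℕ} (A B : Matrix (Fin N) (Fin N) ℂ)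
    (hA : A.IsHermitian) (hB : B.IsHermitian)
    (a b : Fin N → ℝ) (ha_mono : Monotone a) (hb_mono : Monotone b)
    (hca : A.charpoly = ∏ i : Fin N, (X - C ((a i : ℂ))))
    (hcb : (A + B).charpoly = ∏ i : Fin N, (X - C ((b i : ℂ)))) :
    ∀ i : Fin N, |b i - a i| ≤ ‖Matrix.toEuclideanCLM (𝕜 := ℂ) B‖ := by
  intro i
  obtain ⟨u, hu⟩ := hA.exists_orthonormalBasis_toEuclideanCLM_apply_eq_smul hca
  obtain ⟨w, hw⟩ := (hA.add hB).exists_orthonormalBasis_toEuclideanCLM_apply_eq_smul hcb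
  simpa only [map_add, add_sub_cancel_left] using
    u.abs_sub_le_opNorm_sub_of_apply_eq_smul ha_mono hb_mono hu hw i
end
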